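/- arXiv:1512.07608 — 2 statements merged into one kernel-verified Lean document; each statement's English description precedes it below -/
import Mathlib

section
/- For every positive integer s, ∑_{k=1}^{s} (-1)^k · P(2s, 2k-1) · ζ_E(2k)/π^{2k} = -1/(2(2s+1)), where P(n, r) = n!/(n-r)! is the falling factorial (number of permutations) and ζ_E is the Euler zeta function. -/
open Real

noncomputable def eulerZeta (s : ℕ) : ℝ := ∑' n : ℕ, (-1 : ℝ) ^ ((n + 1) - 1) / (n + 1 : ℝ) ^ s

/-!
Evaluating the cosine Fourier series of the Bernoulli polynomial `B₂ₖ(x)` at `x = 1/2` gives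
`ζ_E(2k) = (-1)^(k+1) (2^(2k-1) - 1) π^(2k) B₂ₖ / (2k)!`, and `(2s+1) P(2s, 2k-1) = (2k)! C(2s+1, 2k)`.
With `n = 2s + 1` the claim thus becomes `∑ₖ C(n, 2k) (2 - 2^(2k)) B₂ₖ = -1`. This follows from
`∑_{j<n} C(n, j) Bⱼ = 0` and `∑_{j≤n} C(n, j) 2^j Bⱼ = 2^n Bₙ(1/2) = (2 - 2^n) Bₙ`, because
`Bⱼ = 0` for odd `j ≥ 3` and the `j = 1` term carries the factor `2 - 2^1 = 0`.
-/

open Finset Nat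

theorem Finset.sum_range_two_mul_of_odd_eq_zero {M : Type*} [AddCommMonoid M] {f : ℕ → M}
    (hf : ∀ i, f (2 * i + 1) = 0) (m : ℕ) :
    ∑ j ∈ range (2 * m), f j = ∑ i ∈ range m, f (2 * i) := by
  induction m with
  | zero => simp
  | succ m ih => rw [mul_add_one, sum_range_succ, sum_range_succ, sum_range_succ, ih, hf, add_zero]

theorem Nat.succ_mul_descFactorial_eq_factorial_mul_choose (n m : ℕ) :
    (n + 1) * n.descFactorial m = (m + 1)! * (n + 1).choose (m + 1) := by
  rw [← succ_descFactorial_succ, descFactorial_eq_factorial_mul_choose]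

theorem bernoulliFun_eq_sum (n : ℕ) (x : ℝ) :
    bernoulliFun n x = ∑ i ∈ range (n + 1), (n.choose i : ℝ) * bernoulli i * x ^ (n - i) := by
  simp only [bernoulliFun, Polynomial.bernoulli, Polynomial.map_sum, Polynomial.eval_finsetSum,
    Polynomial.map_monomial, Polynomial.eval_monomial, map_mul, eq_ratCast, map_natCast]
  exact sum_congr rfl fun i _ => by ring

theorem sum_choose_mul_two_pow_mul_bernoulli (n : ℕ) :
    ∑ i ∈ range (n + 1), (n.choose i : ℝ) * 2 ^ i * bernoulli i = (2 - 2 ^ n) * bernoulli n := by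
  have h := bernoulliFun_eval_half n
  rw [bernoulliFun_eq_sum, div_sub_one (by positivity), div_mul_eq_mul_div,
    eq_div_iff (by positivity), sum_mul] at h
  rw [← h]
  refine sum_congr rfl fun i hi => ?_
  obtain ⟨j, rfl⟩ := Nat.exists_eq_add_of_le (mem_range_succ_iff.mp hi)
  rw [Nat.add_sub_cancel_left, pow_add, inv_pow]
  field_simp

theorem sum_choose_mul_two_sub_two_pow_mul_bernoulli {n : ℕ} (hn : n ≠ 1) :
    ∑ i ∈ range (n + 1), (n.choose i : ℝ) * (2 - 2 ^ i) * bernoulli i = 2 ^ n * bernoulli n := by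
  have h : ∑ i ∈ range n, (n.choose i : ℝ) * bernoulli i = 0 := by
    exact_mod_cast (sum_bernoulli n).trans (if_neg hn)
  calc ∑ i ∈ range (n + 1), (n.choose i : ℝ) * (2 - 2 ^ i) * bernoulli i
      = 2 * ∑ i ∈ range (n + 1), (n.choose i : ℝ) * bernoulli i
          - ∑ i ∈ range (n + 1), (n.choose i : ℝ) * 2 ^ i * bernoulli i := by
        rw [mul_sum, ← sum_sub_distrib]
        exact sum_congr rfl fun i _ => by ring
    _ = 2 * bernoulli n - (2 - 2 ^ n) * bernoulli n := by
        rw [sum_range_succ, h, sum_choose_mul_two_pow_mul_bernoulli, choose_self, cast_one,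
          zero_add, one_mul]
    _ = 2 ^ n * bernoulli n := by ring

theorem sum_Icc_choose_two_mul_mul_two_sub_two_pow_mul_bernoulli {s : ℕ} (hs : 0 < s) :
    ∑ k ∈ Icc 1 s, ((2 * s + 1).choose (2 * k) : ℝ) * (2 - 2 ^ (2 * k)) * bernoulli (2 * k)
      = -1 := by
  have hodd (i : ℕ) :
      ((2 * s + 1).choose (2 * i + 1) : ℝ) * (2 - 2 ^ (2 * i + 1)) * bernoulli (2 * i + 1) = 0 := by
    rcases i with _ | i
    · norm_num
    · rw [bernoulli_eq_zero_of_odd (odd_two_mul_add_one _) (by omega)]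
      simp
  have h := sum_choose_mul_two_sub_two_pow_mul_bernoulli (n := 2 * s + 1) (by omega)
  rw [show 2 * s + 1 + 1 = 2 * (s + 1) by ring, sum_range_two_mul_of_odd_eq_zero hodd,
    sum_range_succ', bernoulli_eq_zero_of_odd (odd_two_mul_add_one _) (by omega)] at h
  rw [← Ico_add_one_right_eq_Icc, sum_Ico_eq_sum_range, Nat.add_sub_cancel]
  simp only [add_comm 1]
  simp only [mul_zero, choose_zero_right, cast_one, pow_zero, one_mul, bernoulli_zero,
    Rat.cast_one, mul_one, Rat.cast_zero] at h
  linarith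

theorem eulerZeta_two_mul {k : ℕ} (hk : k ≠ 0) :
    eulerZeta (2 * k) = (-1) ^ (k + 1) * π ^ (2 * k) * (2 ^ (2 * k) - 2) * bernoulli (2 * k)
      / (2 * (2 * k)!) := by
  have h := hasSum_one_div_nat_pow_mul_cos hk (x := 2⁻¹) ⟨by norm_num, by norm_num⟩
  have hcos (n : ℕ) : cos (2 * π * n * 2⁻¹) = (-1) ^ n := by
    rw [← cos_nat_mul_pi]
    ring_nf
  simp only [hcos] at h
  change HasSum _ (_ * bernoulliFun (2 * k) 2⁻¹) at h
  rw [bernoulliFun_eval_half, ← hasSum_nat_add_iff' 1] at h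
  simp only [range_one, sum_singleton, cast_zero, zero_pow (by omega : 2 * k ≠ 0), div_zero,
    zero_mul, sub_zero] at h
  simp only [eulerZeta, Nat.add_sub_cancel]
  convert h.neg.tsum_eq using 1
  · congr 1 with n
    push_cast
    ring
  · field_simp
    ring

theorem neg_one_pow_mul_descFactorial_mul_eulerZeta_div_pi_pow (s : ℕ) {k : ℕ} (hk : k ≠ 0) :
    (-1 : ℝ) ^ k * ((2 * s).descFactorial (2 * k - 1) : ℝ) * eulerZeta (2 * k) / π ^ (2 * k)
      = ((2 * s + 1).choose (2 * k) : ℝ) * (2 - 2 ^ (2 * k)) * bernoulli (2 * k)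
          / (2 * (2 * s + 1)) := by
  have hdesc : (2 * s + 1 : ℝ) * (2 * s).descFactorial (2 * k - 1)
      = (2 * k)! * (2 * s + 1).choose (2 * k) := by
    have h := succ_mul_descFactorial_eq_factorial_mul_choose (2 * s) (2 * k - 1)
    rw [Nat.sub_add_cancel (by omega)] at h
    exact_mod_cast h
  have hsign : (-1 : ℝ) ^ k * (-1) ^ (k + 1) = -1 := by
    rw [pow_succ, ← mul_assoc, ← mul_pow]
    norm_num
  have hpi : π ^ (2 * k) ≠ 0 := by positivity
  calc (-1 : ℝ) ^ k * ((2 * s).descFactorial (2 * k - 1) : ℝ) * eulerZeta (2 * k) / π ^ (2 * k)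
      = (-1) ^ k * (-1) ^ (k + 1) * ((2 * s + 1 : ℝ) * (2 * s).descFactorial (2 * k - 1))
          * (2 ^ (2 * k) - 2) * bernoulli (2 * k) / (2 * (2 * k)! * (2 * s + 1)) := by
        rw [eulerZeta_two_mul hk]
        field_simp
    _ = _ := by
        rw [hsign, hdesc]
        field_simp
        ring

theorem recurrence_sum (s : ℕ) (hs : 0 < s) :
    ∑ k ∈ Finset.Icc 1 s,
      (-1 : ℝ) ^ k * ((2 * s).descFactorial (2 * k - 1) : ℝ) * eulerZeta (2 * k) / π ^ (2 * k)
      = -1 / (2 * (2 * (s : ℝ) + 1)) := by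
  rw [sum_congr rfl fun k hk => neg_one_pow_mul_descFactorial_mul_eulerZeta_div_pi_pow s
      (one_le_iff_ne_zero.mp (mem_Icc.mp hk).1), ← sum_div,
    sum_Icc_choose_two_mul_mul_two_sub_two_pow_mul_bernoulli hs]
end

section
/- For every positive integer m and every real x with -2 < x < 2, x^{2m} = 2^{2m}/(2m+1) + ∑_{n=1}^∞ a_n cos(nπx/2), where a_n = ∑_{k=1}^{m} (-1)^{k+1} P(2m, 2k-1) · 2^{2m-2k+1} · 2^{2k}/(n^{2k} π^{2k}) · cos(nπ) and P(n,r) = n!/(n-r)!. -/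
/-! With `t = (x + 2) / 4 ∈ [0, 1]` one has `cos (2π n t) = cos (nπ) cos (nπx/2)`, so the classical
Fourier series `B_{2k}(t) = (-1)^(k+1) 2 (2k)! ∑_{n ≥ 1} cos (2π n t) / (2π n)^(2k)` of the Bernoulli
polynomials turns the `k`-th part of the series into a multiple of `B_{2k}(t)`. What remains is the
polynomial identity `∑_{k ≤ m} C(2m+1, 2k) 4^k B_{2k}(t) = (2m+1) (2t-1)^(2m)`: expanding
`2^n B_n(t + 1/2)` and `(-2)^n B_n(t - 1/2)` (with `n = 2m+1`) by the addition formula and adding,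
the odd-index terms cancel, while `B_n(t + 1/2) - B_n(t - 1/2) = n (t - 1/2)^(n-1)`. -/

open Real Finset Polynomial
open scoped Nat

namespace Polynomial

theorem iterate_derivative_bernoulli (j n : ℕ) :
    derivative^[j] (bernoulli n) = (n.descFactorial j : ℚ[X]) * bernoulli (n - j) := by
  induction j with
  | zero => simp
  | succ j ih =>
    rw [Function.iterate_succ_apply', ih, derivative_natCast_mul, derivative_bernoulli,
      Nat.descFactorial_succ, Nat.sub_sub, Nat.cast_mul]
    ring

theorem hasseDeriv_bernoulli (j n : ℕ) :
    hasseDeriv j (bernoulli n) = (n.choose j : ℚ[X]) * bernoulli (n - j) := by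
  refine nsmul_right_injective (Nat.factorial_ne_zero j) ?_
  have h := congr_fun (factorial_smul_hasseDeriv (R := ℚ) (k := j)) (bernoulli n)
  simp only [LinearMap.smul_apply] at h
  simp only [h, iterate_derivative_bernoulli, Nat.descFactorial_eq_factorial_mul_choose,
    nsmul_eq_mul, Nat.cast_mul, mul_assoc]

theorem natDegree_bernoulli_le (n : ℕ) : (bernoulli n).natDegree ≤ n :=
  natDegree_sum_le_of_forall_le _ _ fun _ _ => (natDegree_monomial_le _).trans (Nat.sub_le _ _)

end Polynomial

theorem bernoulliFun_add (n : ℕ) (x y : ℝ) :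
    bernoulliFun n (x + y) = ∑ j ∈ range (n + 1), n.choose j * bernoulliFun (n - j) x * y ^ j := by
  set P := (Polynomial.bernoulli n).map (algebraMap ℚ ℝ)
  have hdeg : (taylor x P).natDegree < n + 1 := by
    rw [natDegree_taylor]
    exact Nat.lt_succ_of_le (natDegree_map_le.trans (natDegree_bernoulli_le n))
  have hcoeff (j : ℕ) : (taylor x P).coeff j = n.choose j * bernoulliFun (n - j) x := by
    have : hasseDeriv j P = (hasseDeriv j (Polynomial.bernoulli n)).map (algebraMap ℚ ℝ) := by
      ext i; simp [hasseDeriv_coeff, P]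
    rw [taylor_coeff, this, hasseDeriv_bernoulli]
    simp [bernoulliFun]
  rw [bernoulliFun, add_comm, ← taylor_eval, eval_eq_sum_range' hdeg]
  simp only [hcoeff]

theorem bernoulliFun_one_add (n : ℕ) (x : ℝ) :
    bernoulliFun n (1 + x) = bernoulliFun n x + n * x ^ (n - 1) := by
  simpa [bernoulliFun, Polynomial.aeval_comp]
    using congr_arg (·.aeval x) (Polynomial.bernoulli_comp_one_add_X n)

theorem pow_mul_bernoulliFun_add_inv (n : ℕ) {c : ℝ} (hc : c ≠ 0) (x : ℝ) :
    c ^ n * bernoulliFun n (x + c⁻¹) = ∑ j ∈ range (n + 1), n.choose j * c ^ j * bernoulliFun j x := by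
  rw [bernoulliFun_add, mul_sum, ← sum_range_reflect]
  refine sum_congr rfl fun j hj => ?_
  have hjn : j ≤ n := Nat.lt_succ_iff.mp (mem_range.mp hj)
  have hpow : c ^ n * c⁻¹ ^ (n - j) = c ^ j := by
    rw [inv_pow, ← pow_sub₀ c hc (Nat.sub_le n j), Nat.sub_sub_self hjn]
  rw [Nat.add_sub_cancel, Nat.sub_sub_self hjn, Nat.choose_symm hjn, ← hpow]
  ring

theorem Finset.sum_range_two_mul {M : Type*} [AddCommMonoid M] (f : ℕ → M) (m : ℕ) :
    ∑ j ∈ range (2 * m), f j = ∑ k ∈ range m, (f (2 * k) + f (2 * k + 1)) := by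
  induction m with
  | zero => simp
  | succ m ih => rw [Nat.mul_succ, sum_range_succ, sum_range_succ, ih, sum_range_succ, add_assoc]

theorem sum_choose_mul_four_pow_mul_bernoulliFun (m : ℕ) (v : ℝ) :
    ∑ k ∈ range (m + 1), ((2 * m + 1).choose (2 * k) : ℝ) * 4 ^ k * bernoulliFun (2 * k) v =
      (2 * m + 1) * (2 * v - 1) ^ (2 * m) := by
  set n := 2 * m + 1
  have hsum : ∑ j ∈ range (n + 1), n.choose j * 2 ^ j * bernoulliFun j v +
      ∑ j ∈ range (n + 1), n.choose j * (-2) ^ j * bernoulliFun j v =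
      2 * ∑ k ∈ range (m + 1), (n.choose (2 * k) : ℝ) * 4 ^ k * bernoulliFun (2 * k) v := by
    rw [← sum_add_distrib, show n + 1 = 2 * (m + 1) by omega, sum_range_two_mul, mul_sum]
    refine sum_congr rfl fun k _ => ?_
    simp only [pow_succ, pow_mul]
    ring
  have hshift : bernoulliFun n (v + 2⁻¹) = bernoulliFun n (v + (-2)⁻¹) + n * (v - 2⁻¹) ^ (2 * m) := by
    rw [show v + 2⁻¹ = 1 + (v + (-2)⁻¹) by ring, bernoulliFun_one_add, Nat.add_sub_cancel]
    ring
  rw [← pow_mul_bernoulliFun_add_inv n two_ne_zero, ← pow_mul_bernoulliFun_add_inv n (by norm_num),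
    hshift, Odd.neg_pow ⟨m, rfl⟩] at hsum
  have hscale : (2 : ℝ) ^ n * (v - 2⁻¹) ^ (2 * m) = 2 * (2 * v - 1) ^ (2 * m) := by
    rw [pow_succ, mul_comm _ (2 : ℝ), mul_assoc, pow_mul, pow_mul, pow_mul, ← mul_pow]
    ring_nf
  push_cast [n] at hsum hscale ⊢
  linear_combination (-1 / 2 : ℝ) * hsum + (m + 1 / 2 : ℝ) * hscale

theorem hasSum_one_div_succ_pow_mul_cos_mul_cos {k : ℕ} (hk : k ≠ 0) {L x : ℝ} (hL : 0 < L)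
    (hx : x ∈ Set.Icc (-L) L) :
    HasSum (fun n : ℕ => 1 / ((n : ℝ) + 1) ^ (2 * k) *
        (cos (((n : ℝ) + 1) * π) * cos (((n : ℝ) + 1) * π * x / L)))
      ((-1 : ℝ) ^ (k + 1) * (2 * π) ^ (2 * k) / 2 / (2 * k)! *
        bernoulliFun (2 * k) ((x + L) / (2 * L))) := by
  obtain ⟨hxL, hxR⟩ := hx
  have ht : (x + L) / (2 * L) ∈ Set.Icc (0 : ℝ) 1 :=
    ⟨div_nonneg (by linarith) (by positivity), (div_le_one (by positivity)).mpr (by linarith)⟩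
  have h := (hasSum_nat_add_iff' 1).mpr (hasSum_one_div_nat_pow_mul_cos hk ht)
  simp only [range_one, sum_singleton, Nat.cast_zero, zero_pow (mul_ne_zero two_ne_zero hk),
    div_zero, zero_mul, sub_zero, Nat.cast_add, Nat.cast_one] at h
  refine h.congr_fun fun n => ?_
  have hsin : sin (((n : ℝ) + 1) * π) = 0 := mod_cast sin_nat_mul_pi (n + 1)
  have harg : 2 * π * ((n : ℝ) + 1) * ((x + L) / (2 * L)) =
      ((n : ℝ) + 1) * π + ((n : ℝ) + 1) * π * x / L := by
    field_simp
    ring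
  rw [harg, cos_add, hsin, zero_mul, sub_zero]

theorem hasSum_x_pow_fourier_term {m k : ℕ} (hk : k ∈ Icc 1 m) {x : ℝ} (hx : x ∈ Set.Icc (-2) 2) :
    HasSum (fun n : ℕ => (-1 : ℝ) ^ (k + 1) * ((2 * m).descFactorial (2 * k - 1) : ℝ) *
        2 ^ (2 * m - 2 * k + 1) * (2 ^ (2 * k) / (((n : ℝ) + 1) ^ (2 * k) * π ^ (2 * k))) *
        cos (((n : ℝ) + 1) * π) * cos (((n : ℝ) + 1) * π * x / 2))
      (2 ^ (2 * m) / (2 * m + 1) *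
        ((2 * m + 1).choose (2 * k) * 4 ^ k * bernoulliFun (2 * k) ((x + 2) / 4))) := by
  obtain ⟨hk1, hkm⟩ := mem_Icc.mp hk
  have h := (hasSum_one_div_succ_pow_mul_cos_mul_cos (k := k) (by omega) two_pos hx).mul_left
    ((-1 : ℝ) ^ (k + 1) * ((2 * m).descFactorial (2 * k - 1) : ℝ) * 2 ^ (2 * m - 2 * k + 1) *
      2 ^ (2 * k) / π ^ (2 * k))
  have hP : (2 * m + 1 : ℝ) * (2 * m).descFactorial (2 * k - 1) =
      (2 * k)! * (2 * m + 1).choose (2 * k) := by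
    have := Nat.succ_descFactorial_succ (2 * m) (2 * k - 1)
    rw [Nat.sub_add_cancel (by omega), Nat.descFactorial_eq_factorial_mul_choose] at this
    exact_mod_cast this.symm
  have hpow : (2 : ℝ) ^ (2 * m - 2 * k + 1) * 2 ^ (2 * k) = 2 * 2 ^ (2 * m) := by
    rw [← pow_add, ← pow_succ']
    congr 1
    omega
  have hsign : ((-1 : ℝ) ^ (k + 1)) ^ 2 = 1 := by
    rw [← pow_mul, mul_comm, pow_mul, neg_one_sq, one_pow]
  have hval : (2 : ℝ) ^ (2 * m) / (2 * m + 1) *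
        ((2 * m + 1).choose (2 * k) * 4 ^ k * bernoulliFun (2 * k) ((x + 2) / 4)) =
      (-1 : ℝ) ^ (k + 1) * ((2 * m).descFactorial (2 * k - 1) : ℝ) * 2 ^ (2 * m - 2 * k + 1) *
        2 ^ (2 * k) / π ^ (2 * k) * ((-1 : ℝ) ^ (k + 1) * (2 * π) ^ (2 * k) / 2 / (2 * k)! *
          bernoulliFun (2 * k) ((x + 2) / (2 * 2))) := by
    rw [show (x + 2) / (2 * 2) = (x + 2) / 4 by norm_num, mul_pow,
      show (4 : ℝ) ^ k = 2 ^ (2 * k) by rw [pow_mul]; norm_num]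
    set B := bernoulliFun (2 * k) ((x + 2) / 4)
    set P : ℝ := ↑((2 * m).descFactorial (2 * k - 1))
    set Q : ℝ := 2 ^ (2 * m - 2 * k + 1) * 2 ^ (2 * k)
    field_simp
    linear_combination (-B * (2 * m + 1) * P * Q) * hsign - B * Q * hP -
      B * (2 * k)! * (2 * m + 1).choose (2 * k) * hpow
  rw [hval]
  refine h.congr_fun fun n => ?_
  field_simp

theorem fourier_series_x_pow_general (m : ℕ) (x : ℝ) (hx1 : -2 < x) (hx2 : x < 2) :
    x ^ (2 * m) = 2 ^ (2 * m) / (2 * (m : ℝ) + 1) +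
      ∑' n : ℕ,
        (∑ k ∈ Finset.Icc 1 m,
            (-1 : ℝ) ^ (k + 1) * ((2 * m).descFactorial (2 * k - 1) : ℝ) *
              2 ^ (2 * m - 2 * k + 1) * (2 ^ (2 * k) / (((n : ℝ) + 1) ^ (2 * k) * π ^ (2 * k))) *
              Real.cos (((n : ℝ) + 1) * π)) *
          Real.cos (((n : ℝ) + 1) * π * x / 2) := by
  have hsum := hasSum_sum fun k hk => hasSum_x_pow_fourier_term (m := m) hk ⟨hx1.le, hx2.le⟩
  have hbern := sum_choose_mul_four_pow_mul_bernoulliFun m ((x + 2) / 4)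
  rw [range_eq_Ico, sum_eq_sum_Ico_succ_bot (by omega : 0 < m + 1), zero_add,
    Ico_add_one_right_eq_Icc] at hbern
  simp only [mul_zero, Nat.choose_zero_right, Nat.cast_one, pow_zero, bernoulliFun_zero,
    mul_one] at hbern
  simp only [sum_mul]
  rw [hsum.tsum_eq, ← mul_sum]
  field_simp
  rw [hbern, show 2 * ((x + 2) / 4) - 1 = x / 2 by ring, div_pow]
  field_simp

theorem fourier_series_x_pow (m : ℕ) (hm : 0 < m) (x : ℝ) (hx1 : -2 < x) (hx2 : x < 2) :
    x ^ (2 * m) = 2 ^ (2 * m) / (2 * (m : ℝ) + 1) +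
      ∑' n : ℕ,
        (∑ k ∈ Finset.Icc 1 m,
            (-1 : ℝ) ^ (k + 1) * ((2 * m).descFactorial (2 * k - 1) : ℝ) *
              2 ^ (2 * m - 2 * k + 1) * (2 ^ (2 * k) / (((n : ℝ) + 1) ^ (2 * k) * π ^ (2 * k))) *
              Real.cos (((n : ℝ) + 1) * π)) *
          Real.cos (((n : ℝ) + 1) * π * x / 2) :=
  fourier_series_x_pow_general m x hx1 hx2
end
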